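/- For every nonnegative integer n, ((q;q)_n)^2 = Σ_{k=0}^{n} (-1)^k · (2k+1) · q^{binom(k+1,2)} · [2n+1 choose n+k+1]_q, as an identity of polynomials in q. -/

import Mathlib

/-!
The argument is a Wilf–Zeilberger telescoping. Writing `T n k` for the `k`-th summand, one has
`T (n+1) k - (1 - q^(n+1))^2 T n k = G (k+1) - G k` for an explicit certificate `G`; since
`G 0 = 0` (symmetry of `[2n+1, n]`) and `G (n+1) = -T (n+1) (n+1)`, the sum `S n` satisfies
`S (n+1) = (1 - q^(n+1))^2 S n`, and `S 0 = 1`. The certificate relation itself reduces, through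
the ratios of neighbouring Gaussian binomials, to an identity of rational functions in `q`.
-/

open Finset

/-- The q-shifted factorial `(q;q)_r = ∏_{i=1}^r (1 - q^i)` in `ℚ(q)`. -/
noncomputable def qPoch (r : ℕ) : RatFunc ℚ :=
  ∏ i ∈ Finset.range r, (1 - (RatFunc.X : RatFunc ℚ) ^ (i + 1))

/-- The Gaussian binomial coefficient `[a choose b]_q`, zero outside `0 ≤ b ≤ a`. -/
noncomputable def qbinom (a : ℕ) (b : ℤ) : RatFunc ℚ :=
  if 0 ≤ b ∧ b ≤ (a : ℤ) then qPoch a / (qPoch b.toNat * qPoch (a - b.toNat)) else 0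

open RatFunc (X)

theorem RatFunc.one_sub_X_pow_ne_zero {K : Type*} [Field K] {m : ℕ} (hm : m ≠ 0) :
    (1 - X ^ m : RatFunc K) ≠ 0 := by
  have hpoly : (Polynomial.X ^ m - Polynomial.C 1 : Polynomial K) ≠ 0 :=
    Polynomial.X_pow_sub_C_ne_zero (Nat.pos_of_ne_zero hm) 1
  rw [← neg_sub, neg_ne_zero, ← RatFunc.algebraMap_X, ← map_pow,
    ← map_one (algebraMap (Polynomial K) (RatFunc K)), ← Polynomial.C_1, ← map_sub]
  exact RatFunc.algebraMap_ne_zero hpoly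

theorem qPoch_zero : qPoch 0 = 1 := prod_range_zero _

theorem qPoch_succ (m : ℕ) : qPoch (m + 1) = qPoch m * (1 - X ^ (m + 1)) :=
  prod_range_succ _ m

theorem qPoch_ne_zero (m : ℕ) : qPoch m ≠ 0 :=
  prod_ne_zero_iff.2 fun i _ ↦ RatFunc.one_sub_X_pow_ne_zero i.succ_ne_zero

theorem qbinom_of_le {a b : ℕ} (h : b ≤ a) :
    qbinom a b = qPoch a / (qPoch b * qPoch (a - b)) := by
  rw [qbinom, if_pos ⟨b.cast_nonneg, Int.ofNat_le.2 h⟩, Int.toNat_natCast]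

theorem qbinom_of_lt {a : ℕ} {b : ℤ} (h : a < b) : qbinom a b = 0 :=
  if_neg fun hb ↦ (h.trans_le hb.2).false

theorem qbinom_self (a : ℕ) : qbinom a a = 1 := by
  rw [qbinom_of_le le_rfl, Nat.sub_self, qPoch_zero, mul_one, div_self (qPoch_ne_zero a)]

theorem qbinom_symm {a b : ℕ} (h : b ≤ a) : qbinom a ↑(a - b) = qbinom a b := by
  rw [qbinom_of_le (Nat.sub_le a b), qbinom_of_le h, Nat.sub_sub_self h, mul_comm]

theorem one_sub_X_pow_mul_qbinom_succ (a j : ℕ) :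
    (1 - X ^ (j + 1)) * qbinom a ↑(j + 1) = (1 - X ^ (a - j)) * qbinom a j := by
  rcases lt_or_ge j a with h | h
  · obtain ⟨d, rfl⟩ := Nat.exists_eq_add_of_lt h
    rw [qbinom_of_le h, qbinom_of_le (by omega), show j + d + 1 - (j + 1) = d by omega,
      show j + d + 1 - j = d + 1 by omega, qPoch_succ j, qPoch_succ d]
    have := qPoch_ne_zero j
    have := qPoch_ne_zero d
    have := RatFunc.one_sub_X_pow_ne_zero (K := ℚ) j.succ_ne_zero
    have := RatFunc.one_sub_X_pow_ne_zero (K := ℚ) d.succ_ne_zero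
    field_simp
  · rw [qbinom_of_lt (by omega), Nat.sub_eq_zero_of_le h, pow_zero, sub_self, mul_zero, zero_mul]

theorem one_sub_X_pow_mul_qbinom_add_two (a j : ℕ) :
    (1 - X ^ (j + 1)) * (1 - X ^ (a + 1 - j)) * qbinom (a + 2) ↑(j + 1) =
      (1 - X ^ (a + 1)) * (1 - X ^ (a + 2)) * qbinom a j := by
  rcases le_or_gt j a with h | h
  · obtain ⟨d, rfl⟩ := Nat.exists_eq_add_of_le h
    rw [qbinom_of_le h, qbinom_of_le (by omega), show j + d + 2 - (j + 1) = d + 1 by omega,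
      show j + d + 1 - j = d + 1 by omega, Nat.add_sub_cancel_left, qPoch_succ j, qPoch_succ d,
      show j + d + 2 = j + d + 1 + 1 by rfl, qPoch_succ, qPoch_succ]
    have := qPoch_ne_zero j
    have := qPoch_ne_zero d
    have := qPoch_ne_zero (j + d)
    have := RatFunc.one_sub_X_pow_ne_zero (K := ℚ) j.succ_ne_zero
    have := RatFunc.one_sub_X_pow_ne_zero (K := ℚ) d.succ_ne_zero
    field_simp
  · rw [qbinom_of_lt (b := (j : ℤ)) (by omega)]
    rcases Nat.lt_or_ge (a + 1) j with h' | h'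
    · rw [qbinom_of_lt (by omega)]; ring
    · obtain rfl : j = a + 1 := by omega
      simp

noncomputable def jacobiTerm (n k : ℕ) : RatFunc ℚ :=
  (-1) ^ k * (2 * (k : RatFunc ℚ) + 1) * X ^ (k + 1).choose 2 * qbinom (2 * n + 1) ↑(n + k + 1)

noncomputable def jacobiCert (n k : ℕ) : RatFunc ℚ :=
  (-1) ^ (k + 1) * X ^ (k.choose 2 + n + 1) *
    ((2 * (k : RatFunc ℚ) + 1) * qbinom (2 * n + 1) ↑(n + k) +
      (2 * (k : RatFunc ℚ) - 1) * X ^ k * qbinom (2 * n + 1) ↑(n + k + 1))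

theorem choose_two_succ (k : ℕ) : (k + 1).choose 2 = k.choose 2 + k := by
  rw [Nat.choose_succ_succ', Nat.choose_one_right, add_comm]

theorem jacobiTerm_succ_sub {n k : ℕ} (hk : k ≤ n) :
    jacobiTerm (n + 1) k - (1 - X ^ (n + 1)) ^ 2 * jacobiTerm n k =
      jacobiCert n (k + 1) - jacobiCert n k := by
  obtain ⟨d, rfl⟩ := Nat.exists_eq_add_of_le hk
  have r1 := one_sub_X_pow_mul_qbinom_succ (2 * (k + d) + 1) (k + d + k)
  have r2 := one_sub_X_pow_mul_qbinom_succ (2 * (k + d) + 1) (k + d + k + 1)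
  have r3 := one_sub_X_pow_mul_qbinom_add_two (2 * (k + d) + 1) (k + d + k + 1)
  rw [show 2 * (k + d) + 1 - (k + d + k) = d + 1 by omega] at r1
  rw [show 2 * (k + d) + 1 - (k + d + k + 1) = d by omega] at r2
  rw [show 2 * (k + d) + 1 + 1 - (k + d + k + 1) = d + 1 by omega] at r3
  simp only [jacobiTerm, jacobiCert, choose_two_succ]
  rw [show 2 * (k + d + 1) + 1 = 2 * (k + d) + 1 + 2 by ring,
    show k + d + 1 + k + 1 = k + d + k + 1 + 1 by ring,
    show k + d + (k + 1) + 1 = k + d + k + 1 + 1 by ring,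
    show k + d + (k + 1) = k + d + k + 1 by ring]
  -- The relations make `x`, `z`, `w` multiples of `y`, leaving an identity in `ℚ(X)`.
  generalize qbinom (2 * (k + d) + 1) ↑(k + d + k) = x at *
  generalize qbinom (2 * (k + d) + 1) ↑(k + d + k + 1) = y at *
  generalize qbinom (2 * (k + d) + 1) ↑(k + d + k + 1 + 1) = z at *
  generalize qbinom (2 * (k + d) + 1 + 2) ↑(k + d + k + 1 + 1) = w at *
  have h1 : (1 - X ^ (d + 1) : RatFunc ℚ) ≠ 0 := RatFunc.one_sub_X_pow_ne_zero d.succ_ne_zero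
  have h2 : (1 - X ^ (k + d + k + 1 + 1) : RatFunc ℚ) ≠ 0 :=
    RatFunc.one_sub_X_pow_ne_zero (k + d + k + 1).succ_ne_zero
  have hx : x = (1 - X ^ (k + d + k + 1)) * y / (1 - X ^ (d + 1)) := by
    rw [eq_div_iff h1]; linear_combination -r1
  have hz : z = (1 - X ^ d) * y / (1 - X ^ (k + d + k + 1 + 1)) := by
    rw [eq_div_iff h2]; linear_combination r2
  have hw : w = (1 - X ^ (2 * (k + d) + 1 + 1)) * (1 - X ^ (2 * (k + d) + 1 + 2)) * y /
      ((1 - X ^ (k + d + k + 1 + 1)) * (1 - X ^ (d + 1))) := by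
    rw [eq_div_iff (mul_ne_zero h2 h1)]; linear_combination r3
  subst hx hz hw
  push_cast
  field_simp
  ring

theorem jacobiCert_zero (n : ℕ) : jacobiCert n 0 = 0 := by
  have hsymm : qbinom (2 * n + 1) ↑(n + 0 + 1) = qbinom (2 * n + 1) ↑(n + 0) := by
    rw [← qbinom_symm (by omega : n + 0 ≤ 2 * n + 1),
      show 2 * n + 1 - (n + 0) = n + 0 + 1 by omega]
  simp only [jacobiCert, hsymm]
  ring

theorem jacobiTerm_succ_self_add_jacobiCert (n : ℕ) :
    jacobiTerm (n + 1) (n + 1) + jacobiCert n (n + 1) = 0 := by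
  have hlast : qbinom (2 * (n + 1) + 1) ↑(n + 1 + (n + 1) + 1) = 1 := by
    rw [show n + 1 + (n + 1) + 1 = 2 * (n + 1) + 1 by ring, qbinom_self]
  have hmid : qbinom (2 * n + 1) ↑(n + (n + 1)) = 1 := by
    rw [show n + (n + 1) = 2 * n + 1 by ring, qbinom_self]
  have hout : qbinom (2 * n + 1) ↑(n + (n + 1) + 1) = 0 := qbinom_of_lt (by omega)
  simp only [jacobiTerm, jacobiCert, hlast, hmid, hout, choose_two_succ]
  ring

theorem sum_jacobiTerm_succ (n : ℕ) :
    ∑ k ∈ range (n + 2), jacobiTerm (n + 1) k =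
      (1 - X ^ (n + 1)) ^ 2 * ∑ k ∈ range (n + 1), jacobiTerm n k := by
  have htelescope : ∑ k ∈ range (n + 1), jacobiTerm (n + 1) k =
      (1 - X ^ (n + 1)) ^ 2 * ∑ k ∈ range (n + 1), jacobiTerm n k + jacobiCert n (n + 1) := by
    rw [mul_sum, ← sub_eq_iff_eq_add', ← sum_sub_distrib, ← sub_zero (jacobiCert n _),
      ← jacobiCert_zero n, ← sum_range_sub]
    exact sum_congr rfl fun k hk ↦ jacobiTerm_succ_sub (Nat.lt_succ_iff.1 (mem_range.1 hk))
  rw [sum_range_succ, htelescope, add_assoc, add_comm (jacobiCert n _),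
    jacobiTerm_succ_self_add_jacobiCert, add_zero]

theorem qPoch_sq_eq_sum_jacobiTerm (n : ℕ) :
    qPoch n ^ 2 = ∑ k ∈ range (n + 1), jacobiTerm n k := by
  induction n with
  | zero => simpa [jacobiTerm, qPoch_zero] using (qbinom_self 1).symm
  | succ n ih => rw [sum_jacobiTerm_succ, ← ih, qPoch_succ]; ring

/-- Symmetric finite form of Jacobi's identity (Theorem 2.2):
`(q;q)_n^2 = Σ_{k=0}^{n} (-1)^k (2k+1) q^{C(k+1,2)} [2n+1, n+k+1]_q`. -/
theorem finite_jacobi_symmetric (n : ℕ) :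
    qPoch n ^ 2 =
      ∑ k ∈ Finset.range (n + 1),
        (-1 : RatFunc ℚ) ^ k * ((2 * k + 1 : ℕ) : RatFunc ℚ) *
          (RatFunc.X : RatFunc ℚ) ^ (k * (k + 1) / 2) *
            qbinom (2 * n + 1) ((n : ℤ) + k + 1) := by
  rw [qPoch_sq_eq_sum_jacobiTerm]
  refine sum_congr rfl fun k _ ↦ ?_
  rw [jacobiTerm, Nat.choose_two_right, Nat.add_sub_cancel, mul_comm (k + 1)]
  push_cast
  rfl
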